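/- Let n ≥ 4 and, for 1 ≤ i ≤ n, let BS_{n−1}^i be the subgraph of the bubble-sort star graph BS_n induced by the permutations whose value in the n-th position equals i. Then any two vertices lying in different copies BS_{n−1}^i and BS_{n−1}^j (i ≠ j) have at most one common outside neighbour. -/

import Mathlib

/-- The Cayley graph of a group with connection set `S`: `x` is adjacent to `x·s` for
`s ∈ S` (symmetrized, loops removed). -/
def cayleyGraph {G : Type*} [Group G] (S : Set G) : SimpleGraph G :=
  SimpleGraph.fromRel (fun x y => ∃ s ∈ S, y = x * s)

/-- The bubble-sort star graph `BS_n`: the Cayley graph of `Sym(n)` (permutations of the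
`n` positions `0, …, n-1`, written as words) with connection set
`{(1 i) : 2 ≤ i ≤ n} ∪ {(i, i+1) : 2 ≤ i ≤ n-1}` (in 1-based notation). -/
def bubbleSortStar (n : ℕ) (hn : 3 ≤ n) : SimpleGraph (Equiv.Perm (Fin n)) :=
  cayleyGraph ({σ | ∃ i : Fin n, 1 ≤ (i : ℕ) ∧ σ = Equiv.swap ⟨0, by omega⟩ i} ∪
    {σ | ∃ j : ℕ, ∃ h : j + 1 < n, 1 ≤ j ∧ σ = Equiv.swap ⟨j, by omega⟩ ⟨j + 1, h⟩})

/-! Every generator of `BS_n` is an involution, so an outside neighbour of `x` is `x·s` for a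
generator `s` moving the last position, i.e. `s = (0, n-1)` or `s = (n-2, n-1)`. Two vertices
`u ≠ v` then share two outside neighbours only if `u·a = v·b` and `u·b = v·a` for these two
transpositions `a, b`, which forces `a·b⁻¹ = b·a⁻¹`, i.e. `ab = ba`; but `(ab)(n-1) = n-2` and
`(ba)(n-1) = 0`. -/

lemma cayleyGraph_adj_iff {G : Type*} [Group G] {S : Set G} (hS : ∀ s ∈ S, s⁻¹ ∈ S)
    {x y : G} : (cayleyGraph S).Adj x y ↔ x ≠ y ∧ ∃ s ∈ S, y = x * s := by
  rw [cayleyGraph, SimpleGraph.fromRel_adj]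
  refine and_congr_right fun _ => ⟨?_, Or.inl⟩
  rintro (h | ⟨s, hs, rfl⟩)
  · exact h
  · exact ⟨s⁻¹, hS s hs, by simp⟩

lemma Set.subsingleton_inter_mul_pair {G : Type*} [Group G] {a b u v : G}
    (hab : a * b⁻¹ ≠ b * a⁻¹) (huv : u ≠ v) :
    (({u * a, u * b} : Set G) ∩ {v * a, v * b}).Subsingleton := by
  have key : ¬ (u * a = v * b ∧ u * b = v * a) := by
    rintro ⟨h₁, h₂⟩
    apply hab
    calc a * b⁻¹ = u⁻¹ * v := by rw [eq_inv_mul_iff_mul_eq, ← mul_assoc, h₁, mul_inv_cancel_right]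
      _ = b * a⁻¹ := by rw [eq_comm, eq_inv_mul_iff_mul_eq, ← mul_assoc, h₂, mul_inv_cancel_right]
  have hne : ∀ c : G, u * c ≠ v * c := fun _ h => huv (mul_right_cancel h)
  simp only [Set.Subsingleton, Set.mem_inter_iff, Set.mem_insert_iff, Set.mem_singleton_iff]
  rintro w₁ ⟨rfl | rfl, hv₁ | hv₁⟩ w₂ ⟨rfl | rfl, hv₂ | hv₂⟩ <;>
    first
      | rfl
      | exact (hne _ hv₁).elim
      | exact (hne _ hv₂).elim
      | exact (key ⟨hv₁, hv₂⟩).elim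
      | exact (key ⟨hv₂, hv₁⟩).elim

lemma Equiv.swap_mul_swap_ne_swap_mul_swap {α : Type*} [DecidableEq α] {a b c : α}
    (hab : a ≠ b) (hac : a ≠ c) (hbc : b ≠ c) : swap a c * swap b c ≠ swap b c * swap a c := by
  intro h
  have := congrArg (· c) h
  simp only [Perm.mul_apply, swap_apply_right, swap_apply_of_ne_of_ne hab.symm hbc,
    swap_apply_of_ne_of_ne hab hac] at this
  exact hab this.symm

section OutsideNeighbours

variable {n : ℕ} (hn : 3 ≤ n)

lemma bubbleSortStar_adj_iff {x y : Equiv.Perm (Fin n)} :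
    (bubbleSortStar n hn).Adj x y ↔ x ≠ y ∧
      ∃ s ∈ ({σ | ∃ i : Fin n, 1 ≤ (i : ℕ) ∧ σ = Equiv.swap ⟨0, by omega⟩ i} ∪
        {σ | ∃ j : ℕ, ∃ h : j + 1 < n, 1 ≤ j ∧ σ = Equiv.swap ⟨j, by omega⟩ ⟨j + 1, h⟩} :
          Set (Equiv.Perm (Fin n))), y = x * s := by
  refine cayleyGraph_adj_iff ?_
  rintro s (⟨i, hi, rfl⟩ | ⟨j, hj, hj1, rfl⟩)
  · exact Or.inl ⟨i, hi, Equiv.swap_inv _ _⟩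
  · exact Or.inr ⟨j, hj, hj1, Equiv.swap_inv _ _⟩

lemma bubbleSortStar_outside_neighbour {x w : Equiv.Perm (Fin n)}
    (hadj : (bubbleSortStar n hn).Adj x w)
    (hout : w ⟨n - 1, by omega⟩ ≠ x ⟨n - 1, by omega⟩) :
    w ∈ ({x * Equiv.swap ⟨0, by omega⟩ ⟨n - 1, by omega⟩,
      x * Equiv.swap ⟨n - 2, by omega⟩ ⟨n - 1, by omega⟩} : Set (Equiv.Perm (Fin n))) := by
  obtain ⟨-, s, hs, rfl⟩ := (bubbleSortStar_adj_iff hn).1 hadj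
  have hmoves : s ⟨n - 1, by omega⟩ ≠ ⟨n - 1, by omega⟩ :=
    fun h => hout (by rw [Equiv.Perm.mul_apply, h])
  rcases hs with ⟨i, -, rfl⟩ | ⟨j, hj, -, rfl⟩
  · obtain ⟨-, h0 | hi⟩ := Equiv.swap_apply_ne_self_iff.1 hmoves
    · simp only [Fin.ext_iff] at h0
      omega
    · exact Or.inl (by rw [← hi])
  · obtain ⟨-, hj' | hj'⟩ := Equiv.swap_apply_ne_self_iff.1 hmoves <;>
      simp only [Fin.ext_iff] at hj'
    · omega
    · right
      congr 3 <;> omega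

end OutsideNeighbours

/-- for `n ≥ 4`, splitting `BS_n` into copies `BS_{n-1}^i` according to the
value in the `n`-th position, any two vertices lying in different copies have at most one
common outside neighbour. -/
theorem stmt_9 (n : ℕ) (hn : 4 ≤ n)
    (u v : Equiv.Perm (Fin n))
    (huv : u ⟨n - 1, by omega⟩ ≠ v ⟨n - 1, by omega⟩) :
    {w : Equiv.Perm (Fin n) |
      (bubbleSortStar n (by omega)).Adj u w ∧ w ⟨n - 1, by omega⟩ ≠ u ⟨n - 1, by omega⟩ ∧
      (bubbleSortStar n (by omega)).Adj v w ∧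
        w ⟨n - 1, by omega⟩ ≠ v ⟨n - 1, by omega⟩}.ncard ≤ 1 := by
  have hsub := Set.subsingleton_inter_mul_pair
    (a := Equiv.swap (⟨0, by omega⟩ : Fin n) ⟨n - 1, by omega⟩)
    (b := Equiv.swap (⟨n - 2, by omega⟩ : Fin n) ⟨n - 1, by omega⟩)
    (by
      simpa only [Equiv.swap_inv] using Equiv.swap_mul_swap_ne_swap_mul_swap
        (by simp only [ne_eq, Fin.mk.injEq]; omega) (by simp only [ne_eq, Fin.mk.injEq]; omega)
        (by simp only [ne_eq, Fin.mk.injEq]; omega))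
    (ne_of_apply_ne (· ⟨n - 1, by omega⟩) huv)
  refine Set.ncard_le_one_iff_subsingleton.2 (hsub.anti ?_)
  rintro w ⟨hu, hu_out, hv, hv_out⟩
  exact ⟨bubbleSortStar_outside_neighbour (by omega) hu hu_out,
    bubbleSortStar_outside_neighbour (by omega) hv hv_out⟩
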